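/- arXiv:2503.07009 — 2 statements merged into one kernel-verified Lean document; each statement's English description precedes it below -/
import Mathlib

section
/- Let n ≥ 2 be an integer and let A = (h_{ij}) be a symmetric n×n real matrix with trace H. Then |A|² + h_{11}H − Σ_{i=1}^n h_{1i}² ≥ ((5−n)/4) H², where |A|² = Σ_{i,j} h_{ij}². Moreover, equality holds if and only if h_{11} = −((n−3)/2)H, h_{ii} = H/2 for all i ≥ 2, and h_{ij} = 0 for all i ≠ j. -/
theorem aux2 (n : ℕ) (hn : 2 ≤ n) (A : Matrix (Fin n) (Fin n) ℝ)
    (hsym : A.IsSymm) (H : ℝ) (hH : A.trace = H) (z : Fin n) :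
    (((5 - (n : ℝ)) / 4) * H ^ 2 ≤
      (∑ i, ∑ j, (A i j) ^ 2) + A z z * H - ∑ i, (A z i) ^ 2) ∧
    ((∑ i, ∑ j, (A i j) ^ 2) + A z z * H - ∑ i, (A z i) ^ 2
        = ((5 - (n : ℝ)) / 4) * H ^ 2 ↔
      (A z z = -(((n : ℝ) - 3) / 2) * H ∧
        (∀ i : Fin n, i ≠ z → A i i = H / 2) ∧
        (∀ i j : Fin n, i ≠ j → A i j = 0))) := by
  classical
  set E : Finset (Fin n) := Finset.univ.erase z with hE
  have hzmem : z ∈ (Finset.univ : Finset (Fin n)) := Finset.mem_univ z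
  have hmemE : ∀ i : Fin n, i ∈ E ↔ i ≠ z := by
    intro i; simp [hE]
  have hcard : (E.card : ℝ) = (n : ℝ) - 1 := by
    have : E.card = n - 1 := by
      simp [hE, Finset.card_erase_of_mem]
    rw [this]
    have : (1:ℕ) ≤ n := by omega
    push_cast [Nat.cast_sub this]
    ring
  have hsplit : ∀ f : Fin n → ℝ, ∑ i, f i = f z + ∑ i ∈ E, f i := by
    intro f
    rw [hE, Finset.add_sum_erase _ f hzmem]
  have hsym' : ∀ i j, A i j = A j i := fun i j => (hsym.apply j i)
  -- trace
  have key3 : A z z + ∑ i ∈ E, A i i = H := by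
    rw [← hH, Matrix.trace]
    exact (hsplit fun i => A i i).symm
  -- double sum
  have key1 : ∑ i, ∑ j, (A i j) ^ 2
      = (A z z)^2 + (∑ i ∈ E, (A z i)^2) + ((∑ i ∈ E, (A z i)^2)
        + (∑ i ∈ E, (A i i)^2) + ∑ i ∈ E, ∑ j ∈ E.erase i, (A i j)^2) := by
    rw [hsplit (fun i => ∑ j, (A i j)^2), hsplit (fun j => (A z j)^2)]
    have h2 : ∀ i ∈ E, ∑ j, (A i j)^2
        = (A z i)^2 + ((A i i)^2 + ∑ j ∈ E.erase i, (A i j)^2) := by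
      intro i hi
      rw [hsplit (fun j => (A i j)^2), ← hsym' z i]
      congr 1
      exact (Finset.add_sum_erase E _ hi).symm
    rw [Finset.sum_congr rfl h2, Finset.sum_add_distrib, Finset.sum_add_distrib]
    ring
  have key2 : ∑ i, (A z i)^2 = (A z z)^2 + ∑ i ∈ E, (A z i)^2 :=
    hsplit fun i => (A z i)^2
  have keyP : ∑ i ∈ E, (A i i - H/2)^2
      = (∑ i ∈ E, (A i i)^2) - H * (∑ i ∈ E, A i i) + ((n:ℝ)-1) * (H^2/4) := by
    have h : ∀ i ∈ E, (A i i - H/2)^2 = (A i i)^2 - H * A i i + H^2/4 := by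
      intro i _; ring
    rw [Finset.sum_congr rfl h, Finset.sum_add_distrib, Finset.sum_sub_distrib,
      ← Finset.mul_sum, Finset.sum_const, nsmul_eq_mul, hcard]
  -- the main identity
  obtain ⟨S, hS⟩ : ∃ S : ℝ, S = (∑ i ∈ E, (A i i - H/2)^2) + (∑ i ∈ E, (A z i)^2)
      + ∑ i ∈ E, ∑ j ∈ E.erase i, (A i j)^2 := ⟨_, rfl⟩
  have main : (∑ i, ∑ j, (A i j) ^ 2) + A z z * H - ∑ i, (A z i) ^ 2
      = S + ((5 - (n : ℝ)) / 4) * H ^ 2 := by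
    rw [key1, key2, hS, keyP]
    linear_combination H * key3
  have hSnonneg : 0 ≤ S := by
    have := Finset.sum_nonneg (fun i (_ : i ∈ E) => sq_nonneg (A i i - H/2))
    have := Finset.sum_nonneg (fun i (_ : i ∈ E) => sq_nonneg (A z i))
    have := Finset.sum_nonneg (fun i (_ : i ∈ E) =>
      Finset.sum_nonneg fun j (_ : j ∈ E.erase i) => sq_nonneg (A i j))
    rw [hS]; linarith
  constructor
  · rw [main]; linarith
  rw [main]
  constructor
  · intro h
    have hS0 : S = 0 := by linarith
    have h1 : ∑ i ∈ E, (A i i - H/2)^2 = 0 := by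
      have := Finset.sum_nonneg (fun i (_ : i ∈ E) => sq_nonneg (A z i))
      have := Finset.sum_nonneg (fun i (_ : i ∈ E) =>
        Finset.sum_nonneg fun j (_ : j ∈ E.erase i) => sq_nonneg (A i j))
      have := Finset.sum_nonneg (fun i (_ : i ∈ E) => sq_nonneg (A i i - H/2))
      rw [hS] at hS0; linarith
    have h2 : ∑ i ∈ E, (A z i)^2 = 0 := by
      have := Finset.sum_nonneg (fun i (_ : i ∈ E) => sq_nonneg (A z i))
      have := Finset.sum_nonneg (fun i (_ : i ∈ E) =>
        Finset.sum_nonneg fun j (_ : j ∈ E.erase i) => sq_nonneg (A i j))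
      have := Finset.sum_nonneg (fun i (_ : i ∈ E) => sq_nonneg (A i i - H/2))
      rw [hS] at hS0; linarith
    have h3 : ∑ i ∈ E, ∑ j ∈ E.erase i, (A i j)^2 = 0 := by
      rw [hS] at hS0; linarith
    have hdiag : ∀ i : Fin n, i ≠ z → A i i = H / 2 := by
      intro i hi
      have := (Finset.sum_eq_zero_iff_of_nonneg
        (fun i (_ : i ∈ E) => sq_nonneg (A i i - H/2))).mp h1 i ((hmemE i).mpr hi)
      have := pow_eq_zero_iff (n := 2) (by norm_num) |>.mp this
      linarith
    have hrow : ∀ i : Fin n, i ≠ z → A z i = 0 := by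
      intro i hi
      have := (Finset.sum_eq_zero_iff_of_nonneg
        (fun i (_ : i ∈ E) => sq_nonneg (A z i))).mp h2 i ((hmemE i).mpr hi)
      exact pow_eq_zero_iff (n := 2) (by norm_num) |>.mp this
    have hoff : ∀ i j : Fin n, i ≠ j → A i j = 0 := by
      intro i j hij
      by_cases hiz : i = z
      · exact hiz ▸ hrow j (by rw [hiz] at hij; exact (Ne.symm hij))
      by_cases hjz : j = z
      · rw [hjz, hsym' i z]; exact hrow i hiz
      have hinner := (Finset.sum_eq_zero_iff_of_nonneg
        (fun i (_ : i ∈ E) => Finset.sum_nonneg fun j (_ : j ∈ E.erase i)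
          => sq_nonneg (A i j))).mp h3 i ((hmemE i).mpr hiz)
      have := (Finset.sum_eq_zero_iff_of_nonneg
        (fun j (_ : j ∈ E.erase i) => sq_nonneg (A i j))).mp hinner j
        (Finset.mem_erase.mpr ⟨Ne.symm hij, (hmemE j).mpr hjz⟩)
      exact pow_eq_zero_iff (n := 2) (by norm_num) |>.mp this
    refine ⟨?_, hdiag, hoff⟩
    have ht : ∑ i ∈ E, A i i = ((n:ℝ) - 1) * (H / 2) := by
      rw [Finset.sum_congr rfl (fun i hi => hdiag i ((hmemE i).mp hi)),
        Finset.sum_const, nsmul_eq_mul, hcard]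
    have := key3
    rw [ht] at this
    linarith
  · rintro ⟨h1, h2, h3⟩
    have : S = 0 := by
      rw [hS]
      have e1 : ∑ i ∈ E, (A i i - H/2)^2 = 0 :=
        Finset.sum_eq_zero fun i hi => by rw [h2 i ((hmemE i).mp hi)]; ring
      have e2 : ∑ i ∈ E, (A z i)^2 = 0 :=
        Finset.sum_eq_zero fun i hi => by
          rw [h3 z i (Ne.symm ((hmemE i).mp hi))]; ring
      have e3 : ∑ i ∈ E, ∑ j ∈ E.erase i, (A i j)^2 = 0 :=
        Finset.sum_eq_zero fun i hi => Finset.sum_eq_zero fun j hj => by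
          rw [h3 i j (Ne.symm (Finset.mem_erase.mp hj).1)]; ring
      rw [e1, e2, e3]; ring
    rw [this]; ring

/-- For a symmetric `n × n` real matrix `A` with trace `H`,
`|A|² + A₁₁ H − Σᵢ A₁ᵢ² ≥ ((5−n)/4) H²`, with equality iff
`A₁₁ = −((n−3)/2)H`, `Aᵢᵢ = H/2` for `i ≥ 2`, and `Aᵢⱼ = 0` off the diagonal. -/
theorem stmt_2 (n : ℕ) (hn : 2 ≤ n) (A : Matrix (Fin n) (Fin n) ℝ)
    (hsym : A.IsSymm) (H : ℝ) (hH : A.trace = H) :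
    (((5 - (n : ℝ)) / 4) * H ^ 2 ≤
      (∑ i, ∑ j, (A i j) ^ 2) + A ⟨0, by omega⟩ ⟨0, by omega⟩ * H -
        ∑ i, (A ⟨0, by omega⟩ i) ^ 2) ∧
    ((∑ i, ∑ j, (A i j) ^ 2) + A ⟨0, by omega⟩ ⟨0, by omega⟩ * H -
        ∑ i, (A ⟨0, by omega⟩ i) ^ 2 = ((5 - (n : ℝ)) / 4) * H ^ 2 ↔
      (A ⟨0, by omega⟩ ⟨0, by omega⟩ = -(((n : ℝ) - 3) / 2) * H ∧
        (∀ i : Fin n, i ≠ ⟨0, by omega⟩ → A i i = H / 2) ∧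
        (∀ i j : Fin n, i ≠ j → A i j = 0))) :=
  aux2 n hn A hsym H hH ⟨0, by omega⟩
end

section
/- Fix real constants k, l > 0 with k > 4 + 4l, and define f(s) = −exp(k/(s−3)) for s ∈ [1,3). Then for every s ∈ [1,3): (i) f(s) < 0, (ii) f'(s) > 0, (iii) f''(s) < 0, and (iv) s·f''(s) + l·f'(s) < 0. -/
/-!
With `f(s) = -exp(k/(s-a))` one computes `f' = e·k/(s-a)²` and
`f'' = -e·k·(k + 2(s-a))/(s-a)⁴`, where `e = exp(k/(s-a)) > 0`. Hence
`s f'' + l f' = -e·k/(s-a)⁴ · (k s + 2 s (s-a) - l (s-a)²)`, and for `a = 3` the last factor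
is positive on `[1, 3]` as soon as `k > 4 + 4l`.
-/

open Real Filter Topology

section

variable (k a : ℝ) {x : ℝ}

lemma hasDerivAt_const_div_sub (hx : x ≠ a) :
    HasDerivAt (fun s => k / (s - a)) (-k / (x - a) ^ 2) x := by
  simpa using (hasDerivAt_const x k).fun_div ((hasDerivAt_id x).sub_const a) (sub_ne_zero.mpr hx)

lemma hasDerivAt_neg_exp_const_div_sub (hx : x ≠ a) :
    HasDerivAt (fun s => -exp (k / (s - a))) (exp (k / (x - a)) * k / (x - a) ^ 2) x := by
  refine ((hasDerivAt_const_div_sub k a hx).exp).fun_neg.congr_deriv ?_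
  ring

lemma hasDerivAt_exp_const_div_sub_mul_div_sq (hx : x ≠ a) :
    HasDerivAt (fun s => exp (k / (s - a)) * k / (s - a) ^ 2)
      (-(exp (k / (x - a)) * k * (k + 2 * (x - a)) / (x - a) ^ 4)) x := by
  have hnum := ((hasDerivAt_const_div_sub k a hx).exp).mul_const k
  have hden := ((hasDerivAt_id' x).sub_const a).fun_pow 2
  refine (hnum.fun_div hden (pow_ne_zero 2 (sub_ne_zero.mpr hx))).congr_deriv ?_
  field_simp
  ring

lemma deriv_deriv_neg_exp_const_div_sub (hx : x ≠ a) :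
    deriv (deriv fun s => -exp (k / (s - a))) x =
      -(exp (k / (x - a)) * k * (k + 2 * (x - a)) / (x - a) ^ 4) := by
  have hderiv : deriv (fun s => -exp (k / (s - a))) =ᶠ[𝓝 x]
      fun s => exp (k / (s - a)) * k / (s - a) ^ 2 := by
    filter_upwards [isOpen_ne.mem_nhds hx] with y hy
    exact (hasDerivAt_neg_exp_const_div_sub k a hy).deriv
  rw [hderiv.deriv_eq]
  exact (hasDerivAt_exp_const_div_sub_mul_div_sq k a hx).deriv

end

/-- With `t = 3 - s ∈ [0, 2]` the polynomial is `s (k - 2t) - l t² ≥ k - 2t - l t² ≥ k - 4 - 4l`. -/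
lemma barrier_polynomial_pos {k l s : ℝ} (hl : 0 < l) (hk : 4 + 4 * l < k)
    (hs : s ∈ Set.Icc (1 : ℝ) 3) :
    0 < k * s + 2 * s * (s - 3) - l * (s - 3) ^ 2 := by
  obtain ⟨hs1, hs3⟩ := hs
  nlinarith [mul_nonneg (by linarith : (0 : ℝ) ≤ k - 2 * (3 - s)) (by linarith : (0 : ℝ) ≤ s - 1),
    mul_nonneg hl.le (by nlinarith : (0 : ℝ) ≤ 4 - (3 - s) ^ 2)]

/-- Properties of the barrier function `f(s) = −exp(k/(s−3))` on `[1,3)` when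
`k > 4 + 4l`, `l > 0`. -/
theorem stmt_3 (k l : ℝ) (hl : 0 < l) (hk : 4 + 4 * l < k) :
    ∀ s ∈ Set.Ico (1 : ℝ) 3,
      (fun s : ℝ => -Real.exp (k / (s - 3))) s < 0 ∧
      0 < deriv (fun s : ℝ => -Real.exp (k / (s - 3))) s ∧
      deriv (deriv (fun s : ℝ => -Real.exp (k / (s - 3)))) s < 0 ∧
      s * deriv (deriv (fun s : ℝ => -Real.exp (k / (s - 3)))) s +
        l * deriv (fun s : ℝ => -Real.exp (k / (s - 3))) s < 0 := by
  rintro s ⟨hs1, hs3⟩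
  have hk0 : 0 < k := by linarith
  have hsub : s - 3 ≠ 0 := sub_ne_zero.mpr hs3.ne
  have hE := exp_pos (k / (s - 3))
  rw [(hasDerivAt_neg_exp_const_div_sub k 3 hs3.ne).deriv,
    deriv_deriv_neg_exp_const_div_sub k 3 hs3.ne]
  refine ⟨neg_neg_of_pos hE, by positivity, neg_neg_of_pos ?_, ?_⟩
  · have hk2 : 0 < k + 2 * (s - 3) := by linarith
    positivity
  · calc s * -(exp (k / (s - 3)) * k * (k + 2 * (s - 3)) / (s - 3) ^ 4)
          + l * (exp (k / (s - 3)) * k / (s - 3) ^ 2)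
        = -(exp (k / (s - 3)) * k / (s - 3) ^ 4 *
            (k * s + 2 * s * (s - 3) - l * (s - 3) ^ 2)) := by
          field_simp
          ring
      _ < 0 := neg_neg_of_pos (mul_pos (by positivity) (barrier_polynomial_pos hl hk ⟨hs1, hs3.le⟩))
end
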